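/- arXiv:0811.0381 — 7 statements merged into one kernel-verified Lean document; each statement's English description precedes it below -/
import Mathlib

section
/- If a graph G has every edge contained in at most two triangles, then flipping the sign of any edge belonging to at least one imbalanced triangle (where a triangle is balanced iff the product of its ±1 edge labels is 1) does not increase the total number of imbalanced triangles in G. -/
/-!
STATEMENT 0: If every edge of a graph `G` lies in at most two triangles, then flipping
the ±1 label of any edge belonging to at least one imbalanced triangle does not increase
the number of imbalanced triangles.
-/

variable {V : Type*}

/-- `T` is a triangle of `G`: a set of three pairwise adjacent vertices. -/
def IsTriangle (G : SimpleGraph V) (T : Finset V) : Prop :=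
  T.card = 3 ∧ ∀ u ∈ T, ∀ v ∈ T, u ≠ v → G.Adj u v

/-- The edge `e` lies in the triangle `T` (both endpoints belong to `T`). -/
def EdgeIn (e : Sym2 V) (T : Finset V) : Prop := ∀ v ∈ e, v ∈ T

/-- A triangle is balanced if the product of the labels of its three edges is `1`. -/
def IsBalanced [DecidableEq V] (s : Sym2 V → ℤ) (T : Finset V) : Prop :=
  ∏ e ∈ T.sym2.filter (fun e => ¬ e.IsDiag), s e = 1

/-- The number of imbalanced triangles of `G` under the labeling `s`. -/
noncomputable def imbCount [DecidableEq V] (G : SimpleGraph V) (s : Sym2 V → ℤ) : ℕ :=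
  {T : Finset V | IsTriangle G T ∧ ¬ IsBalanced s T}.ncard

/-- Flip the sign of the edge `e`. -/
def flipEdge [DecidableEq V] (s : Sym2 V → ℤ) (e : Sym2 V) : Sym2 V → ℤ :=
  fun f => if f = e then - s f else s f

theorem triad_flip_nonincreasing [Fintype V] [DecidableEq V] (G : SimpleGraph V)
    (s : Sym2 V → ℤ) (hs : ∀ e, s e = 1 ∨ s e = -1)
    (h2 : ∀ e ∈ G.edgeSet, {T : Finset V | IsTriangle G T ∧ EdgeIn e T}.ncard ≤ 2)
    (e : Sym2 V) (he : e ∈ G.edgeSet)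
    (himb : ∃ T : Finset V, IsTriangle G T ∧ EdgeIn e T ∧ ¬ IsBalanced s T) :
    imbCount G (flipEdge s e) ≤ imbCount G s := by
  classical
  obtain ⟨T0, hT0tri, hT0e, hT0imb⟩ := himb
  have hnd : ¬ e.IsDiag := G.not_isDiag_of_mem_edgeSet he
  have hmem : ∀ T : Finset V,
      e ∈ T.sym2.filter (fun f => ¬ f.IsDiag) ↔ EdgeIn e T := by
    intro T
    constructor
    · intro hf
      have := (Finset.mem_filter.mp hf).1
      intro v hv
      exact Finset.mem_sym2_iff.mp this v hv
    · intro hf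
      exact Finset.mem_filter.mpr ⟨Finset.mem_sym2_iff.mpr hf, hnd⟩
  have hprod_ne : ∀ T : Finset V, ¬ EdgeIn e T →
      ∏ f ∈ T.sym2.filter (fun f => ¬ f.IsDiag), flipEdge s e f
        = ∏ f ∈ T.sym2.filter (fun f => ¬ f.IsDiag), s f := by
    intro T hT
    refine Finset.prod_congr rfl fun f hf => ?_
    have hfe : f ≠ e := by rintro rfl; exact hT ((hmem T).mp hf)
    simp [flipEdge, hfe]
  have hprod_in : ∀ T : Finset V, EdgeIn e T →
      ∏ f ∈ T.sym2.filter (fun f => ¬ f.IsDiag), flipEdge s e f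
        = - ∏ f ∈ T.sym2.filter (fun f => ¬ f.IsDiag), s f := by
    intro T hT
    have he' : e ∈ T.sym2.filter (fun f => ¬ f.IsDiag) := (hmem T).mpr hT
    rw [← Finset.prod_erase_mul _ _ he', ← Finset.prod_erase_mul _ _ he']
    have hrest : ∏ f ∈ (T.sym2.filter (fun f => ¬ f.IsDiag)).erase e, flipEdge s e f
        = ∏ f ∈ (T.sym2.filter (fun f => ¬ f.IsDiag)).erase e, s f := by
      refine Finset.prod_congr rfl fun f hf => ?_
      have hfe : f ≠ e := Finset.ne_of_mem_erase hf
      simp [flipEdge, hfe]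
    rw [hrest]
    simp [flipEdge]
  have hpm : ∀ T : Finset V,
      (∏ f ∈ T.sym2.filter (fun f => ¬ f.IsDiag), s f) = 1 ∨
      (∏ f ∈ T.sym2.filter (fun f => ¬ f.IsDiag), s f) = -1 := by
    intro T
    refine Finset.prod_induction _ (fun x => x = 1 ∨ x = -1) ?_ (Or.inl rfl) (fun f _ => hs f)
    rintro a b (rfl | rfl) (rfl | rfl) <;> simp
  have hbal_flip : ∀ T : Finset V, EdgeIn e T →
      (IsBalanced (flipEdge s e) T ↔ ¬ IsBalanced s T) := by
    intro T hT
    unfold IsBalanced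
    rw [hprod_in T hT]
    rcases hpm T with h | h <;> rw [h] <;> norm_num
  have hbal_same : ∀ T : Finset V, ¬ EdgeIn e T →
      (IsBalanced (flipEdge s e) T ↔ IsBalanced s T) := by
    intro T hT
    unfold IsBalanced
    rw [hprod_ne T hT]
  -- counting via ncard
  have hfin : ∀ S : Set (Finset V), S.Finite := fun S => Set.toFinite S
  set Abal : Set (Finset V) := {T | (IsTriangle G T ∧ IsBalanced s T) ∧ EdgeIn e T} with hAbal
  set Aimb : Set (Finset V) := {T | (IsTriangle G T ∧ ¬ IsBalanced s T) ∧ EdgeIn e T} with hAimb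
  set Aout : Set (Finset V) := {T | (IsTriangle G T ∧ ¬ IsBalanced s T) ∧ ¬ EdgeIn e T} with hAout
  have hdisj1 : Disjoint Abal Aout := by
    rw [Set.disjoint_left]; rintro T ⟨_, h1⟩ ⟨⟨_, _⟩, _⟩; tauto
  have hdisj2 : Disjoint Aimb Aout := by
    rw [Set.disjoint_left]; rintro T ⟨_, h1⟩ ⟨_, h2'⟩; exact h2' h1
  have hnew : {T : Finset V | IsTriangle G T ∧ ¬ IsBalanced (flipEdge s e) T} = Abal ∪ Aout := by
    ext T
    simp only [Set.mem_setOf_eq, Set.mem_union, hAbal, hAimb, hAout]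
    by_cases hc : EdgeIn e T
    · have := hbal_flip T hc; tauto
    · have := hbal_same T hc; tauto
  have hold : {T : Finset V | IsTriangle G T ∧ ¬ IsBalanced s T} = Aimb ∪ Aout := by
    ext T
    simp only [Set.mem_setOf_eq, Set.mem_union, hAimb, hAout]
    tauto
  rw [imbCount, imbCount, hnew, hold,
    Set.ncard_union_eq hdisj1 (hfin _) (hfin _),
    Set.ncard_union_eq hdisj2 (hfin _) (hfin _)]
  have key : Abal.ncard ≤ Aimb.ncard := by
    have hdisj3 : Disjoint Abal Aimb := by
      rw [Set.disjoint_left]; rintro T ⟨⟨_, h1⟩, _⟩ ⟨⟨_, h2'⟩, _⟩; exact h2' h1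
    have hsub : Abal ∪ Aimb ⊆ {T : Finset V | IsTriangle G T ∧ EdgeIn e T} := by
      rintro T (⟨⟨h1, _⟩, h3⟩ | ⟨⟨h1, _⟩, h3⟩) <;> exact ⟨h1, h3⟩
    have hle : Abal.ncard + Aimb.ncard ≤ 2 := by
      rw [← Set.ncard_union_eq hdisj3 (hfin _) (hfin _)]
      exact le_trans (Set.ncard_le_ncard hsub (hfin _)) (h2 e he)
    have hge : 1 ≤ Aimb.ncard := by
      have : T0 ∈ Aimb := ⟨⟨hT0tri, hT0imb⟩, hT0e⟩
      have hpos : 0 < Aimb.ncard := (Set.ncard_pos (hfin _)).mpr ⟨T0, this⟩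
      omega
    omega
  omega
end

section
/- Let H be a connected hypergraph all of whose hyperedges have at least 3 vertices, and let w1, w2, w3 be configurations with w3 nonzero. If w2 is reachable from w1 under the hyperedge switching process and w3 is reachable from w1 in one step, then the Z2-linear system H(w3,w2) has a solution (obtained from a solution of H(w1,w2) by flipping the variable of the edge used in the step w1 → w3). -/
variable {V : Type*} [DecidableEq V]

/-- Scheduling a hyperedge `C` flips (adds `1` mod `2` to) the value of every vertex of `C`. -/
def hsched (C : Finset V) (w : V → ZMod 2) : V → ZMod 2 :=
  fun v => if v ∈ C then w v + 1 else w v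

/-- Reachability for the hyperedge switching process on the hypergraph with hyperedge set `E`:
a legal move schedules a hyperedge containing at least one vertex of value `1`. -/
inductive HSReach (E : Finset (Finset V)) : (V → ZMod 2) → (V → ZMod 2) → Prop
  | refl (w : V → ZMod 2) : HSReach E w w
  | step {w₁ w₂ : V → ZMod 2} {C : Finset V} :
      HSReach E w₁ w₂ → C ∈ E → (∃ v ∈ C, w₂ v = 1) → HSReach E w₁ (hsched C w₂)

/-- `z` is a solution of the `ZMod 2`-linear system `H(w₁,w₂)`:
for every vertex `v`, the sum of `z e` over hyperedges `e` containing `v`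
equals `w₂ v - w₁ v`. -/
def Solves (E : Finset (Finset V)) (z : Finset V → ZMod 2) (w₁ w₂ : V → ZMod 2) : Prop :=
  ∀ v : V, ∑ e ∈ E.filter (fun e => v ∈ e), z e = w₂ v - w₁ v

/-- The system `H(w₁,w₂)` has a solution over `ZMod 2`. -/
def HSolvable (E : Finset (Finset V)) (w₁ w₂ : V → ZMod 2) : Prop :=
  ∃ z : Finset V → ZMod 2, Solves E z w₁ w₂

/-- Two vertices are adjacent iff they share a hyperedge. -/
def HAdj (E : Finset (Finset V)) (u v : V) : Prop := ∃ e ∈ E, u ∈ e ∧ v ∈ e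

/-- `u` and `v` are in the same connected component of the hypergraph. -/
def HConn (E : Finset (Finset V)) (u v : V) : Prop := Relation.ReflTransGen (HAdj E) u v


lemma flip_sum {E : Finset (Finset V)} {C : Finset V} (hC : C ∈ E)
    (z : Finset V → ZMod 2) (v : V) :
    ∑ e ∈ E.filter (fun e => v ∈ e), Function.update z C (z C + 1) e
      = (∑ e ∈ E.filter (fun e => v ∈ e), z e) + (if v ∈ C then 1 else 0) := by
  by_cases hv : v ∈ C
  · have hmem : C ∈ E.filter (fun e => v ∈ e) := Finset.mem_filter.2 ⟨hC, hv⟩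
    rw [Finset.sum_update_of_mem hmem, ← Finset.add_sum_erase _ z hmem]
    rw [Finset.erase_eq]; simp [hv]; ring
  · simp only [hv, if_false, add_zero]
    refine Finset.sum_congr rfl fun e he => ?_
    have : e ≠ C := fun h => hv (h ▸ (Finset.mem_filter.1 he).2)
    exact Function.update_of_ne this _ z

lemma flip_solves {E : Finset (Finset V)} {C : Finset V} (hC : C ∈ E)
    {z : Finset V → ZMod 2} {w₁ w₂ : V → ZMod 2} (hz : Solves E z w₁ w₂) :
    Solves E (Function.update z C (z C + 1)) (hsched C w₁) w₂ := by
  intro v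
  rw [flip_sum hC, hz v, hsched]
  by_cases hv : v ∈ C <;> simp [hv]
  have h2 : (2 : ZMod 2) = 0 := by decide
  linear_combination h2

lemma flip_solves' {E : Finset (Finset V)} {C : Finset V} (hC : C ∈ E)
    {z : Finset V → ZMod 2} {w₁ w₂ : V → ZMod 2} (hz : Solves E z w₁ w₂) :
    Solves E (Function.update z C (z C + 1)) w₁ (hsched C w₂) := by
  intro v
  rw [flip_sum hC, hz v, hsched]
  by_cases hv : v ∈ C <;> simp [hv] <;> ring

lemma reach_solvable {E : Finset (Finset V)} {w₁ w₂ : V → ZMod 2}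
    (h : HSReach E w₁ w₂) : HSolvable E w₁ w₂ := by
  induction h with
  | refl => exact ⟨fun _ => 0, fun v => by simp⟩
  | step _ hC _ ih =>
    obtain ⟨z, hz⟩ := ih
    exact ⟨_, flip_solves' hC hz⟩

/-- on a connected hypergraph with all hyperedges of size ≥ 3, if `w₂` is
reachable from `w₁`, and `w₃ ≠ 0` is reachable from `w₁` in one step (scheduling the legal
hyperedge `l`), then `H(w₃,w₂)` is solvable; indeed any solution of `H(w₁,w₂)` with the
variable of `l` flipped is a solution of `H(w₃,w₂)`. -/
theorem solvable_after_one_step [Fintype V] (E : Finset (Finset V))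
    (hbig : ∀ e ∈ E, 3 ≤ e.card)
    (hconn : ∀ u v : V, HConn E u v)
    (w₁ w₂ w₃ : V → ZMod 2)
    (hw₃ : w₃ ≠ fun _ => 0)
    (hreach : HSReach E w₁ w₂)
    (l : Finset V) (hl : l ∈ E) (hlegal : ∃ v ∈ l, w₁ v = 1)
    (hstep : w₃ = hsched l w₁) :
    HSolvable E w₃ w₂ ∧
      ∀ z : Finset V → ZMod 2, Solves E z w₁ w₂ →
        Solves E (Function.update z l (z l + 1)) w₃ w₂ := by
  subst hstep
  refine ⟨?_, fun z hz => flip_solves hl hz⟩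
  obtain ⟨z, hz⟩ := reach_solvable hreach
  exact ⟨_, flip_solves hl hz⟩
end

section
/- Let P be a random process on positive integers where from position m > 1 the particle moves to m - X with X ∈ {1,...,m-1}, X independent of the past, and E[X] ≥ g(m) for a monotone nondecreasing positive function g. Then the expected time T to reach position 1 from position n satisfies E[T] ≤ ∫_1^n dx / g(x). -/
open MeasureTheory
open scoped ENNReal

/-- First time (in `ℝ≥0∞`, `⊤` if never) the time-indexed predicate `P` holds along `ω`. -/
noncomputable def hitTime {Ω : Type*} (P : ℕ → Ω → Prop) (ω : Ω) : ℝ≥0∞ :=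
  sInf {r : ℝ≥0∞ | ∃ k : ℕ, r = (k : ℝ≥0∞) ∧ P k ω}

/-! The potential `H(m) = ∫₁^m dx / g x` turns the drift condition into an expected unit
decrease per step: a jump from `m` down to `m - X ≥ 1` lowers `H` by at least `X / g m`, because
`1 / g ≥ 1 / g m` on `[m - X, m]`, and `E[X | past] ≥ g m`. Hence `P(Y t > 1) ≤ E[H(Y t)] - E[H(Y (t+1))]`;
summing over `t` telescopes to `E[T] = ∑ₜ P(Y t > 1) ≤ H(n)`. -/

section HitTime

variable {Ω : Type*}

theorem hitTime_eq_find {P : ℕ → Ω → Prop} {ω : Ω} [DecidablePred (P · ω)] (h : ∃ k, P k ω) :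
    hitTime P ω = Nat.find h := by
  apply le_antisymm
  · exact sInf_le ⟨_, rfl, Nat.find_spec h⟩
  · refine le_sInf ?_
    rintro r ⟨k, rfl, hk⟩
    exact Nat.cast_le.mpr (Nat.find_le hk)

theorem hitTime_eq_sum_indicator {P : ℕ → Ω → Prop} {ω : Ω} {N : ℕ}
    (hP : Monotone (P · ω)) (hN : P N ω) :
    hitTime P ω = ∑ t ∈ Finset.range N, {ω | ¬ P t ω}.indicator 1 ω := by
  classical
  have hex : ∃ k, P k ω := ⟨N, hN⟩
  have hlt : ∀ t, t < Nat.find hex ↔ ¬ P t ω := fun t =>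
    ⟨Nat.find_min hex, fun ht => not_le.mp fun hle => ht (hP hle (Nat.find_spec hex))⟩
  have hfilter : (Finset.range N).filter (¬ P · ω) = Finset.range (Nat.find hex) := by
    ext t
    simp only [Finset.mem_filter, Finset.mem_range, ← hlt]
    exact ⟨And.right, fun ht => ⟨ht.trans_le (Nat.find_le hN), ht⟩⟩
  simp only [Set.indicator_apply, Set.mem_ofPred_eq, Pi.one_apply, Finset.sum_boole, hfilter,
    Finset.card_range, hitTime_eq_find hex]

theorem lintegral_hitTime_eq_sum [MeasurableSpace Ω] (μ : Measure Ω) {P : ℕ → Ω → Prop} {N : ℕ}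
    (hP : ∀ ω, Monotone (P · ω)) (hN : ∀ ω, P N ω) (hmeas : ∀ t, MeasurableSet {ω | P t ω}) :
    ∫⁻ ω, hitTime P ω ∂μ = ∑ t ∈ Finset.range N, μ {ω | ¬ P t ω} := by
  have hmeas' : ∀ t, MeasurableSet {ω | ¬ P t ω} := fun t => (hmeas t).compl
  simp_rw [hitTime_eq_sum_indicator (hP _) (hN _)]
  rw [lintegral_finsetSum _ fun t _ => measurable_one.indicator (hmeas' t)]
  exact Finset.sum_congr rfl fun t _ => lintegral_indicator_one (hmeas' t)

end HitTime

section Descent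

structure IsDescent (y : ℕ → ℕ) : Prop where
  step : ∀ t, 1 < y t → 1 ≤ y (t + 1) ∧ y (t + 1) < y t
  stay : ∀ t, y t ≤ 1 → y (t + 1) = y t

namespace IsDescent

variable {y : ℕ → ℕ}

theorem antitone (hy : IsDescent y) : Antitone y := by
  refine antitone_nat_of_succ_le fun t => ?_
  by_cases h : 1 < y t
  · exact (hy.step t h).2.le
  · exact (hy.stay t (not_lt.mp h)).le

theorem one_le (hy : IsDescent y) (h0 : 1 ≤ y 0) (t : ℕ) : 1 ≤ y t := by
  induction t with
  | zero => exact h0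
  | succ t ih =>
    by_cases h : 1 < y t
    · exact (hy.step t h).1
    · rw [hy.stay t (not_lt.mp h)]; exact ih

theorem le_one_or_add_le (hy : IsDescent y) (t : ℕ) : y t ≤ 1 ∨ y t + t ≤ y 0 := by
  induction t with
  | zero => exact Or.inr le_rfl
  | succ t ih =>
    by_cases h : 1 < y t
    · have := (hy.step t h).2
      omega
    · exact Or.inl ((hy.antitone t.le_succ).trans (not_lt.mp h))

theorem eq_one (hy : IsDescent y) (h0 : 1 ≤ y 0) : y (y 0 - 1) = 1 := by
  have := hy.one_le h0 (y 0 - 1)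
  rcases hy.le_one_or_add_le (y 0 - 1) with h | h <;> omega

end IsDescent

end Descent

section Potential

variable {g : ℝ → ℝ} {a b : ℝ}

theorem intervalIntegrable_one_div_of_monotone (hg : Monotone g) (ha : 0 < g a) (hab : a ≤ b) :
    IntervalIntegrable (fun x => 1 / g x) volume a b := by
  refine AntitoneOn.intervalIntegrable fun x hx y _ hxy => ?_
  rw [Set.uIcc_of_le hab] at hx
  exact one_div_le_one_div_of_le (ha.trans_le (hg hx.1)) (hg hxy)

theorem sub_div_le_integral_one_div (hg : Monotone g) (ha : 0 < g a) (hab : a ≤ b) :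
    (b - a) / g b ≤ ∫ x in a..b, 1 / g x :=
  calc (b - a) / g b = ∫ _ in a..b, 1 / g b := by
        rw [intervalIntegral.integral_const, smul_eq_mul]; ring
    _ ≤ ∫ x in a..b, 1 / g x :=
      intervalIntegral.integral_mono_on hab intervalIntegrable_const
        (intervalIntegrable_one_div_of_monotone hg ha hab) fun x hx =>
          one_div_le_one_div_of_le (ha.trans_le (hg hx.1)) (hg hx.2)

noncomputable def driftPotential (g : ℝ → ℝ) (x : ℝ) : ℝ :=
  ∫ y in (1 : ℝ)..x, 1 / g y

theorem sub_div_le_driftPotential_sub (hg : Monotone g) (hg1 : 0 < g 1) (ha : 1 ≤ a)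
    (hab : a ≤ b) : (b - a) / g b ≤ driftPotential g b - driftPotential g a := by
  rw [driftPotential, driftPotential, intervalIntegral.integral_interval_sub_left
    (intervalIntegrable_one_div_of_monotone hg hg1 (ha.trans hab))
    (intervalIntegrable_one_div_of_monotone hg hg1 ha)]
  exact sub_div_le_integral_one_div hg (hg1.trans_le (hg ha)) hab

theorem driftPotential_mono (hg : Monotone g) (hg1 : 0 < g 1) (ha : 1 ≤ a) (hab : a ≤ b) :
    driftPotential g a ≤ driftPotential g b := by
  have := sub_div_le_driftPotential_sub hg hg1 ha hab
  have := div_nonneg (sub_nonneg.mpr hab) (hg1.trans_le (hg (ha.trans hab))).le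
  linarith

theorem driftPotential_nonneg (hg : Monotone g) (hg1 : 0 < g 1) (ha : 1 ≤ a) :
    0 ≤ driftPotential g a := by
  simpa [driftPotential] using driftPotential_mono hg hg1 le_rfl ha

end Potential

section OneStep

variable {Ω : Type*} {m mΩ : MeasurableSpace Ω} {μ : Measure Ω}

theorem integrable_comp_of_le [IsFiniteMeasure μ] {U : Ω → ℕ} {n : ℕ} (hU : Measurable U)
    (hUn : ∀ ω, U ω ≤ n) (f : ℕ → ℝ) : Integrable (fun ω => f (U ω)) μ :=
  Integrable.of_bound (Measurable.of_discrete.comp hU).aestronglyMeasurable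
    (∑ k ∈ Finset.range (n + 1), ‖f k‖) <| ae_of_all _ fun ω =>
      Finset.single_le_sum (f := fun k => ‖f k‖) (fun _ _ => norm_nonneg _)
        (Finset.mem_range.mpr (Nat.lt_succ_of_le (hUn ω)))

theorem integral_mul_condExp_of_bound (hm : m ≤ mΩ) [IsFiniteMeasure μ]
    {w X : Ω → ℝ} (hw : StronglyMeasurable[m] w) (hX : Integrable X μ) {c : ℝ}
    (hwc : ∀ ω, ‖w ω‖ ≤ c) :
    ∫ ω, w ω * μ[X | m] ω ∂μ = ∫ ω, w ω * X ω ∂μ := by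
  calc ∫ ω, w ω * μ[X | m] ω ∂μ = ∫ ω, μ[w * X | m] ω ∂μ := integral_congr_ae
        (condExp_stronglyMeasurable_mul_of_bound hm hw hX c (ae_of_all _ hwc)).symm
    _ = ∫ ω, w ω * X ω ∂μ := integral_condExp hm

theorem measureReal_le_integral_driftPotential_sub (hm : m ≤ mΩ)
    [IsFiniteMeasure μ] {g : ℝ → ℝ} (hg : Monotone g) (hg1 : 0 < g 1) {U V : Ω → ℕ} {n : ℕ}
    (hU : Measurable[m] U) (hV : Measurable V) (hVU : ∀ ω, V ω ≤ U ω) (hV1 : ∀ ω, 1 ≤ V ω)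
    (hUn : ∀ ω, U ω ≤ n)
    (hdrift : ∀ᵐ ω ∂μ, 1 < U ω → g (U ω) ≤ μ[fun ω' => (U ω' : ℝ) - V ω' | m] ω) :
    μ.real {ω | 1 < U ω} ≤
      ∫ ω, driftPotential g (U ω) ∂μ - ∫ ω, driftPotential g (V ω) ∂μ := by
  have hU' : Measurable U := hU.mono hm le_rfl
  have hVn : ∀ ω, V ω ≤ n := fun ω => (hVU ω).trans (hUn ω)
  have hH : ∀ {W : Ω → ℕ}, Measurable W → (∀ ω, W ω ≤ n) →
      Integrable (fun ω => driftPotential g (W ω)) μ := fun hW hWn =>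
    integrable_comp_of_le hW hWn (fun k => driftPotential g k)
  set X : Ω → ℝ := fun ω => (U ω : ℝ) - V ω
  have hX : Integrable X μ :=
    (integrable_comp_of_le hU' hUn (fun k => (k : ℝ))).sub
      (integrable_comp_of_le hV hVn (fun k => (k : ℝ)))
  set w : Ω → ℝ := fun ω => if 1 < U ω then 1 / g (U ω) else 0
  have hw : StronglyMeasurable[m] w :=
    ((Measurable.of_discrete (f := fun k : ℕ => if 1 < k then 1 / g k else 0)).comp
      hU).stronglyMeasurable
  have hgU : ∀ ω, 1 < U ω → 0 < g (U ω) := fun ω h =>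
    hg1.trans_le (hg (Nat.one_le_cast.mpr h.le))
  have hwc : ∀ ω, ‖w ω‖ ≤ 1 / g 1 := by
    intro ω
    by_cases h : 1 < U ω
    · simp only [w, if_pos h, norm_div, norm_one, Real.norm_of_nonneg (hgU ω h).le]
      exact one_div_le_one_div_of_le hg1 (hg (Nat.one_le_cast.mpr h.le))
    · simpa [w, h] using hg1.le
  have hS : MeasurableSet {ω | 1 < U ω} := hU' (measurableSet_Ioi (a := 1))
  calc μ.real {ω | 1 < U ω} = ∫ ω, {ω | 1 < U ω}.indicator 1 ω ∂μ :=
        (integral_indicator_one hS).symm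
    _ ≤ ∫ ω, w ω * μ[X | m] ω ∂μ := by
      refine integral_mono_ae ((integrable_const (1 : ℝ)).indicator hS)
        (integrable_condExp.bdd_mul (hw.mono hm).aestronglyMeasurable (ae_of_all _ hwc)) ?_
      filter_upwards [hdrift] with ω hω
      by_cases h : 1 < U ω
      · simp only [Set.indicator_of_mem (show ω ∈ {ω | 1 < U ω} from h), Pi.one_apply, w,
          if_pos h, one_div_mul_eq_div]
        exact (one_le_div (hgU ω h)).mpr (hω h)
      · simp [w, h]
    _ = ∫ ω, w ω * X ω ∂μ := integral_mul_condExp_of_bound hm hw hX hwc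
    _ ≤ ∫ ω, (driftPotential g (U ω) - driftPotential g (V ω)) ∂μ := by
      refine integral_mono (hX.bdd_mul (hw.mono hm).aestronglyMeasurable (ae_of_all _ hwc))
        ((hH hU' hUn).sub (hH hV hVn)) fun ω => ?_
      have hV1' : (1 : ℝ) ≤ V ω := Nat.one_le_cast.mpr (hV1 ω)
      have hVU' : (V ω : ℝ) ≤ U ω := Nat.cast_le.mpr (hVU ω)
      by_cases h : 1 < U ω
      · simp only [w, X, if_pos h, one_div_mul_eq_div]
        exact sub_div_le_driftPotential_sub hg hg1 hV1' hVU'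
      · simpa [w, h] using driftPotential_mono hg hg1 hV1' hVU'
    _ = _ := integral_sub (hH hU' hUn) (hH hV hVn)

theorem sum_measure_le_ofReal_of_le_sub [IsFiniteMeasure μ] {s : ℕ → Set Ω} {b : ℕ → ℝ} {N : ℕ}
    (hs : ∀ t, μ.real (s t) ≤ b t - b (t + 1)) (hN : 0 ≤ b N) :
    ∑ t ∈ Finset.range N, μ (s t) ≤ ENNReal.ofReal (b 0) :=
  calc ∑ t ∈ Finset.range N, μ (s t) = ENNReal.ofReal (∑ t ∈ Finset.range N, μ.real (s t)) := by
        rw [ENNReal.ofReal_sum_of_nonneg fun _ _ => measureReal_nonneg]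
        exact Finset.sum_congr rfl fun t _ => (ofReal_measureReal).symm
    _ ≤ ENNReal.ofReal (b 0) := ENNReal.ofReal_le_ofReal <| by
        have := Finset.sum_le_sum fun t (_ : t ∈ Finset.range N) => hs t
        rw [Finset.sum_range_sub'] at this
        linarith

end OneStep

/-- a particle starts at integer position `n ≥ 1`; from position `m > 1` it
jumps down by a random amount `X ∈ {1, …, m-1}` whose conditional expectation given the past
is at least `g(m)`, for a monotone nondecreasing positive function `g`; positions `≤ 1` are
absorbing. Then the expected time `T` to reach position `1` satisfies
`E[T] ≤ ∫_1^n dx / g(x)`. -/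
theorem drift_hitting_time_bound {Ω : Type*} {mΩ : MeasurableSpace Ω}
    (μ : Measure Ω) [IsProbabilityMeasure μ]
    (g : ℝ → ℝ) (hg_mono : Monotone g) (hg_pos : ∀ x > 0, 0 < g x)
    (n : ℕ) (hn : 1 ≤ n)
    (ℱ : Filtration ℕ mΩ)
    (Y : ℕ → Ω → ℕ)
    (hadapted : ∀ t, Measurable[ℱ t] (Y t))
    (hY0 : ∀ ω, Y 0 ω = n)
    (hjump : ∀ t ω, 1 < Y t ω → 1 ≤ Y (t + 1) ω ∧ Y (t + 1) ω < Y t ω)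
    (habs : ∀ t ω, Y t ω ≤ 1 → Y (t + 1) ω = Y t ω)
    (hdrift : ∀ t, ∀ᵐ ω ∂μ, 1 < Y t ω →
      g (Y t ω) ≤ (μ[fun ω' => (Y t ω' : ℝ) - (Y (t + 1) ω' : ℝ) | ℱ t]) ω) :
    ∫⁻ ω, hitTime (fun t ω => Y t ω = 1) ω ∂μ ≤
      ENNReal.ofReal (∫ x in (1 : ℝ)..(n : ℝ), 1 / g x) := by
  have hg1 : 0 < g 1 := hg_pos 1 one_pos
  have hdesc : ∀ ω, IsDescent (Y · ω) := fun ω => ⟨(hjump · ω), (habs · ω)⟩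
  have hY1 : ∀ t ω, 1 ≤ Y t ω := fun t ω => (hdesc ω).one_le (hY0 ω ▸ hn) t
  have hYn : ∀ t ω, Y t ω ≤ n := fun t ω => hY0 ω ▸ (hdesc ω).antitone (Nat.zero_le t)
  have hmeas : ∀ t, Measurable (Y t) := fun t => (hadapted t).mono (ℱ.le t) le_rfl
  have hstep : ∀ t, μ.real {ω | 1 < Y t ω} ≤
      ∫ ω, driftPotential g (Y t ω) ∂μ - ∫ ω, driftPotential g (Y (t + 1) ω) ∂μ := fun t =>
    measureReal_le_integral_driftPotential_sub (ℱ.le t) hg_mono hg1 (hadapted t) (hmeas (t + 1))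
      (fun ω => (hdesc ω).antitone t.le_succ) (hY1 (t + 1)) (hYn t) (hdrift t)
  have hmoved : ∀ t, {ω | ¬ Y t ω = 1} = {ω | 1 < Y t ω} := fun t => Set.ext fun ω => by
    have := hY1 t ω
    simp only [Set.mem_ofPred_eq]
    omega
  rw [lintegral_hitTime_eq_sum μ (N := n - 1)
    (fun ω s t hst hs => le_antisymm (hs ▸ (hdesc ω).antitone hst) (hY1 t ω))
    (fun ω => hY0 ω ▸ (hdesc ω).eq_one (hY0 ω ▸ hn))
    (fun t => hmeas t (measurableSet_singleton 1))]
  simp_rw [hmoved]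
  refine (sum_measure_le_ofReal_of_le_sub hstep (integral_nonneg fun ω =>
    driftPotential_nonneg hg_mono hg1 (Nat.one_le_cast.mpr (hY1 _ ω)))).trans_eq ?_
  simp [hY0, driftPotential]
end

section
/- The nondeterministic triad dynamics on an edge-labeled graph G is isomorphic (as a transition system) to the hyperedge switching process on the triadic dual T_3(G): under the correspondence sending a labeling s to the configuration placing a ball on each vertex of T_3(G) corresponding to an imbalanced triangle of G, a move of the triad dynamics flipping edge e corresponds exactly to scheduling the hyperedge of T_3(G) associated with e. -/
variable {V : Type*}

attribute [local instance] Classical.propDecidable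

/-- The configuration on the triadic dual associated to an edge labeling: a triangle-vertex
carries a ball (value `1`) iff the triangle is imbalanced. -/
noncomputable def triadConfig [DecidableEq V] (s : Sym2 V → ℤ) (T : Finset V) : ZMod 2 :=
  if IsBalanced s T then 0 else 1


lemma triadConfig_eq_one [DecidableEq V] (s : Sym2 V → ℤ) (T : Finset V) :
    triadConfig s T = 1 ↔ ¬ IsBalanced s T := by
  unfold triadConfig
  split <;> simp_all

lemma flip_prod [DecidableEq V] (s : Sym2 V → ℤ) (e : Sym2 V) (T : Finset V)
    (hne : ¬ e.IsDiag) :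
    ∏ f ∈ T.sym2.filter (fun f => ¬ f.IsDiag), flipEdge s e f =
      (if EdgeIn e T then -1 else 1) * ∏ f ∈ T.sym2.filter (fun f => ¬ f.IsDiag), s f := by
  by_cases hmem : EdgeIn e T
  · have he : e ∈ T.sym2.filter (fun f => ¬ f.IsDiag) := by
      simp only [Finset.mem_filter, Finset.mem_sym2_iff]
      exact ⟨hmem, hne⟩
    rw [if_pos hmem, ← Finset.mul_prod_erase _ _ he, ← Finset.mul_prod_erase _ s he]
    have h1 : flipEdge s e e = - s e := by simp [flipEdge]
    have h2 : ∀ f ∈ (T.sym2.filter (fun f => ¬ f.IsDiag)).erase e,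
        flipEdge s e f = s f := by
      intro f hf
      have : f ≠ e := (Finset.mem_erase.mp hf).1
      simp [flipEdge, this]
    rw [Finset.prod_congr rfl h2, h1]
    ring
  · have he : e ∉ T.sym2.filter (fun f => ¬ f.IsDiag) := by
      simp only [Finset.mem_filter, Finset.mem_sym2_iff]
      intro h
      exact hmem h.1
    rw [if_neg hmem, one_mul]
    refine Finset.prod_congr rfl fun f hf => ?_
    have : f ≠ e := fun h => he (h ▸ hf)
    simp [flipEdge, this]

lemma prod_pm_one [DecidableEq V] (s : Sym2 V → ℤ) (hs : ∀ e, s e = 1 ∨ s e = -1)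
    (S : Finset (Sym2 V)) : (∏ f ∈ S, s f) = 1 ∨ (∏ f ∈ S, s f) = -1 := by
  induction S using Finset.induction with
  | empty => left; simp
  | @insert a S h ih =>
    rw [Finset.prod_insert h]
    rcases hs a with h1 | h1 <;> rcases ih with h2 | h2 <;>
      simp [h1, h2]

/-- the triad dynamics on `G` is isomorphic to the hyperedge switching process
on the triadic dual `T₃(G)`: an edge `e` may be flipped iff the corresponding hyperedge of
`T₃(G)` (all triangles containing `e`) contains a value-`1` vertex, and flipping `e`
corresponds exactly to scheduling that hyperedge (flipping the values of all its vertices). -/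
theorem triad_dynamics_is_hyperedge_switching [Fintype V] [DecidableEq V]
    (G : SimpleGraph V) (s : Sym2 V → ℤ) (hs : ∀ e, s e = 1 ∨ s e = -1)
    (e : Sym2 V) (he : e ∈ G.edgeSet) :
    ((∃ T : Finset V, IsTriangle G T ∧ EdgeIn e T ∧ ¬ IsBalanced s T) ↔
      (∃ T : Finset V, IsTriangle G T ∧ EdgeIn e T ∧ triadConfig s T = 1)) ∧
    (∀ T : Finset V, IsTriangle G T →
      triadConfig (flipEdge s e) T = triadConfig s T + (if EdgeIn e T then 1 else 0)) := by
  have hnd : ¬ e.IsDiag := by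
    induction e using Sym2.ind with
    | _ a b => exact ((SimpleGraph.mem_edgeSet G).mp he).ne
  constructor
  · constructor <;> rintro ⟨T, h1, h2, h3⟩
    · exact ⟨T, h1, h2, (triadConfig_eq_one s T).mpr h3⟩
    · exact ⟨T, h1, h2, (triadConfig_eq_one s T).mp h3⟩
  · intro T _
    have hflip := flip_prod s e T hnd
    by_cases hmem : EdgeIn e T
    · rw [if_pos hmem, neg_one_mul] at hflip
      rw [if_pos hmem]
      by_cases hb : IsBalanced s T
      · have : ¬ IsBalanced (flipEdge s e) T := by
          unfold IsBalanced at *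
          rw [hflip, hb]
          decide
        simp [triadConfig, hb, this]
      · have hprod : ∏ f ∈ T.sym2.filter (fun f => ¬ f.IsDiag), s f = -1 := by
          rcases prod_pm_one s hs (T.sym2.filter (fun f => ¬ f.IsDiag)) with h | h
          · exact absurd h hb
          · exact h
        have : IsBalanced (flipEdge s e) T := by
          unfold IsBalanced at *
          rw [hflip, hprod]; decide
        simp [triadConfig, hb, this]
        decide
    · rw [if_neg hmem, one_mul] at hflip
      rw [if_neg hmem, add_zero]
      have : IsBalanced (flipEdge s e) T ↔ IsBalanced s T := by
        unfold IsBalanced; rw [hflip]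
      simp [triadConfig, this]
end

section
/- If G is a 2-regular triadic simplicial complex (each edge lies in exactly two triangles), then its triadic dual T_3(G) is a 3-regular simple graph without self-loops, and the hyperedge switching process on T_3(G) coincides with an annihilating walk on this graph: each move takes a ball at a vertex and either moves it to an adjacent vertex (if empty) or annihilates it with the ball there. -/
variable {V : Type*}

attribute [local instance] Classical.propDecidable

/-- if `G` is a triadic simplicial complex (every edge lies in at least one
triangle) that is 2-regular (every edge lies in exactly two triangles), then the triadic
dual `T₃(G)` is a 3-regular simple graph without self-loops (every hyperedge consists of two
distinct triangles, and every triangle has exactly three neighbours), and the hyperedge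
switching process on `T₃(G)` coincides with an annihilating walk: scheduling the hyperedge
of an edge `e` flips the occupancy of precisely the two triangles containing `e`, i.e. the
set of occupied vertices changes by the symmetric difference with `{T₁, T₂}` (a ball moves
if exactly one of them is occupied, and two balls annihilate if both are). -/
theorem dual_is_annihilating_walk [Fintype V] [DecidableEq V] (G : SimpleGraph V)
    (hsimplex : ∀ e ∈ G.edgeSet, ∃ T : Finset V, IsTriangle G T ∧ EdgeIn e T)
    (h2reg : ∀ e ∈ G.edgeSet, {T : Finset V | IsTriangle G T ∧ EdgeIn e T}.ncard = 2) :
    (∀ e ∈ G.edgeSet, ∃ T₁ T₂ : Finset V, T₁ ≠ T₂ ∧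
      {T : Finset V | IsTriangle G T ∧ EdgeIn e T} = {T₁, T₂}) ∧
    (∀ T : Finset V, IsTriangle G T →
      {T' : Finset V | IsTriangle G T' ∧ T' ≠ T ∧ 2 ≤ (T ∩ T').card}.ncard = 3) ∧
    (∀ e ∈ G.edgeSet, ∀ T₁ T₂ : Finset V, T₁ ≠ T₂ →
      {T : Finset V | IsTriangle G T ∧ EdgeIn e T} = {T₁, T₂} →
      ∀ c : Finset V → ZMod 2, (c T₁ = 1 ∨ c T₂ = 1) →
        {T : Finset V | IsTriangle G T ∧ c T + (if EdgeIn e T then 1 else 0) = 1} =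
          symmDiff {T : Finset V | IsTriangle G T ∧ c T = 1} {T₁, T₂}) := by

  classical
  -- key: for each edge and each triangle containing it, there's a unique other triangle
  have key : ∀ e ∈ G.edgeSet, ∀ T : Finset V, IsTriangle G T → EdgeIn e T →
      ∃ U, (IsTriangle G U ∧ EdgeIn e U ∧ U ≠ T) ∧
        ∀ U', IsTriangle G U' → EdgeIn e U' → U' ≠ T → U' = U := by
    intro e he T hT heT
    obtain ⟨T₁, T₂, hne, hset⟩ := Set.ncard_eq_two.mp (h2reg e he)
    have hTmem : T ∈ ({T₁, T₂} : Set (Finset V)) := hset ▸ ⟨hT, heT⟩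
    have h1 : IsTriangle G T₁ ∧ EdgeIn e T₁ := by
      have : T₁ ∈ ({T₁, T₂} : Set (Finset V)) := by left; rfl
      rw [← hset] at this; exact this
    have h2 : IsTriangle G T₂ ∧ EdgeIn e T₂ := by
      have : T₂ ∈ ({T₁, T₂} : Set (Finset V)) := by right; rfl
      rw [← hset] at this; exact this
    rcases hTmem with rfl | rfl
    · refine ⟨T₂, ⟨h2.1, h2.2, fun h => hne h.symm⟩, ?_⟩
      intro U' hU' heU' hne'
      have : U' ∈ ({T, T₂} : Set (Finset V)) := hset ▸ ⟨hU', heU'⟩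
      rcases this with rfl | rfl
      · exact absurd rfl hne'
      · rfl
    · refine ⟨T₁, ⟨h1.1, h1.2, hne⟩, ?_⟩
      intro U' hU' heU' hne'
      have : U' ∈ ({T₁, T} : Set (Finset V)) := hset ▸ ⟨hU', heU'⟩
      rcases this with rfl | rfl
      · rfl
      · exact absurd rfl hne'
  have edgeIn_pair : ∀ (u v : V) (S : Finset V), u ∈ S → v ∈ S → EdgeIn s(u, v) S := by
    intro u v S hu hv w hw
    rcases Sym2.mem_iff.mp hw with rfl | rfl <;> assumption
  refine ⟨?_, ?_, ?_⟩
  · intro e he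
    obtain ⟨T₁, T₂, hne, hset⟩ := Set.ncard_eq_two.mp (h2reg e he)
    exact ⟨T₁, T₂, hne, hset⟩
  · intro T hT
    obtain ⟨a, b, c, hab, hac, hbc, hTabc⟩ := Finset.card_eq_three.mp hT.1
    have ha : a ∈ T := by rw [hTabc]; simp
    have hb : b ∈ T := by rw [hTabc]; simp
    have hc : c ∈ T := by rw [hTabc]; simp
    have eab : s(a, b) ∈ G.edgeSet := hT.2 a ha b hb hab
    have eac : s(a, c) ∈ G.edgeSet := hT.2 a ha c hc hac
    have ebc : s(b, c) ∈ G.edgeSet := hT.2 b hb c hc hbc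
    obtain ⟨U₁, ⟨hU₁t, hU₁e, hU₁ne⟩, hU₁u⟩ := key _ eab T hT (edgeIn_pair a b T ha hb)
    obtain ⟨U₂, ⟨hU₂t, hU₂e, hU₂ne⟩, hU₂u⟩ := key _ eac T hT (edgeIn_pair a c T ha hc)
    obtain ⟨U₃, ⟨hU₃t, hU₃e, hU₃ne⟩, hU₃u⟩ := key _ ebc T hT (edgeIn_pair b c T hb hc)
    have haU₁ : a ∈ U₁ := hU₁e a (by simp)
    have hbU₁ : b ∈ U₁ := hU₁e b (by simp)
    have haU₂ : a ∈ U₂ := hU₂e a (by simp)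
    have hcU₂ : c ∈ U₂ := hU₂e c (by simp)
    have hbU₃ : b ∈ U₃ := hU₃e b (by simp)
    have hcU₃ : c ∈ U₃ := hU₃e c (by simp)
    -- if some U contains all of a b c then U = T, contradiction
    have full : ∀ U : Finset V, IsTriangle G U → a ∈ U → b ∈ U → c ∈ U → U = T := by
      intro U hU haU hbU hcU
      have hsub : T ⊆ U := by
        rw [hTabc]; intro x hx
        simp only [Finset.mem_insert, Finset.mem_singleton] at hx
        rcases hx with rfl | rfl | rfl <;> assumption
      exact (Finset.eq_of_subset_of_card_le hsub (by rw [hU.1, hT.1])).symm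
    have h12 : U₁ ≠ U₂ := by
      intro h; exact hU₁ne (full U₁ hU₁t haU₁ hbU₁ (h ▸ hcU₂))
    have h13 : U₁ ≠ U₃ := by
      intro h; exact hU₁ne (full U₁ hU₁t haU₁ hbU₁ (h ▸ hcU₃))
    have h23 : U₂ ≠ U₃ := by
      intro h; exact hU₂ne (full U₂ hU₂t haU₂ (h ▸ hbU₃) hcU₂)
    have hseteq : {T' : Finset V | IsTriangle G T' ∧ T' ≠ T ∧ 2 ≤ (T ∩ T').card}
        = {U₁, U₂, U₃} := by
      ext T'
      simp only [Set.mem_setOf_eq, Set.mem_insert_iff, Set.mem_singleton_iff]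
      constructor
      · rintro ⟨hT't, hT'ne, hcard⟩
        obtain ⟨u, hu, v, hv, huv⟩ := Finset.one_lt_card.mp hcard
        have huT : u ∈ T := Finset.mem_of_mem_inter_left hu
        have huT' : u ∈ T' := Finset.mem_of_mem_inter_right hu
        have hvT : v ∈ T := Finset.mem_of_mem_inter_left hv
        have hvT' : v ∈ T' := Finset.mem_of_mem_inter_right hv
        rw [hTabc] at huT hvT
        simp only [Finset.mem_insert, Finset.mem_singleton] at huT hvT
        have hcases : (a ∈ T' ∧ b ∈ T') ∨ (a ∈ T' ∧ c ∈ T') ∨ (b ∈ T' ∧ c ∈ T') := by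
          rcases huT with rfl | rfl | rfl <;> rcases hvT with rfl | rfl | rfl <;>
            first
            | exact absurd rfl huv
            | exact Or.inl ⟨huT', hvT'⟩
            | exact Or.inl ⟨hvT', huT'⟩
            | exact Or.inr (Or.inl ⟨huT', hvT'⟩)
            | exact Or.inr (Or.inl ⟨hvT', huT'⟩)
            | exact Or.inr (Or.inr ⟨huT', hvT'⟩)
            | exact Or.inr (Or.inr ⟨hvT', huT'⟩)
        rcases hcases with ⟨h1, h2⟩ | ⟨h1, h2⟩ | ⟨h1, h2⟩
        · exact Or.inl (hU₁u T' hT't (edgeIn_pair a b T' h1 h2) hT'ne)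
        · exact Or.inr (Or.inl (hU₂u T' hT't (edgeIn_pair a c T' h1 h2) hT'ne))
        · exact Or.inr (Or.inr (hU₃u T' hT't (edgeIn_pair b c T' h1 h2) hT'ne))
      · have two_le : ∀ u v : V, u ≠ v → u ∈ T → v ∈ T → ∀ S : Finset V,
            u ∈ S → v ∈ S → 2 ≤ (T ∩ S).card := by
          intro u v huv hu hv S huS hvS
          have : ({u, v} : Finset V) ⊆ T ∩ S := by
            intro x hx
            simp only [Finset.mem_insert, Finset.mem_singleton] at hx
            rcases hx with rfl | rfl <;> exact Finset.mem_inter.mpr ⟨‹_›, ‹_›⟩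
          calc 2 = ({u, v} : Finset V).card := (Finset.card_pair huv).symm
            _ ≤ _ := Finset.card_le_card this
        rintro (rfl | rfl | rfl)
        · exact ⟨hU₁t, hU₁ne, two_le a b hab ha hb _ haU₁ hbU₁⟩
        · exact ⟨hU₂t, hU₂ne, two_le a c hac ha hc _ haU₂ hcU₂⟩
        · exact ⟨hU₃t, hU₃ne, two_le b c hbc hb hc _ hbU₃ hcU₃⟩
    rw [hseteq]
    rw [show ({U₁, U₂, U₃} : Set (Finset V)) = (↑({U₁, U₂, U₃} : Finset (Finset V))) by simp,
      Set.ncard_coe_finset]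
    rw [Finset.card_insert_of_notMem (by simp [h12, h13]),
      Finset.card_insert_of_notMem (by simp [h23]), Finset.card_singleton]
  · intro e he T₁ T₂ hne hpair c _
    have zl : ∀ x : ZMod 2, (x + 1 = 1 ↔ ¬ x = 1) := by decide
    have hmem : ∀ T : Finset V, (IsTriangle G T ∧ EdgeIn e T) ↔ T = T₁ ∨ T = T₂ := by
      intro T
      have := Set.ext_iff.mp hpair T
      simpa using this
    ext T
    simp only [Set.mem_setOf_eq, Set.mem_symmDiff, Set.mem_insert_iff, Set.mem_singleton_iff]
    by_cases htri : IsTriangle G T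
    · by_cases hein : EdgeIn e T
      · have hTp : T = T₁ ∨ T = T₂ := (hmem T).mp ⟨htri, hein⟩
        simp only [htri, hein, if_pos, true_and, zl]
        constructor
        · intro h
          exact Or.inr ⟨hTp, h⟩
        · rintro (⟨h1, h2⟩ | ⟨_, h2⟩)
          · exact absurd hTp h2
          · exact h2
      · have hTp : ¬ (T = T₁ ∨ T = T₂) := fun h => hein ((hmem T).mpr h).2
        simp only [htri, hein, if_neg, true_and, if_false, add_zero]
        constructor
        · intro h; exact Or.inl ⟨h, hTp⟩
        · rintro (⟨h1, _⟩ | ⟨h1, _⟩)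
          · exact h1
          · exact absurd h1 hTp
    · have hTp : ¬ (T = T₁ ∨ T = T₂) := fun h => htri ((hmem T).mpr h).1
      simp only [htri, false_and, false_iff, false_or, not_false_iff, and_true,
        not_or, or_false]
      tauto
end

section
/- For any 3-XOR-SAT formula, repeatedly (a) removing clauses containing a variable appearing in no other clause and (b) whenever two clauses share two variables, eliminating one variable by substitution and deleting one clause, terminates in a reduced formula (no variable in a single clause; no two clauses sharing two variables) that is satisfiable if and only if the original formula is satisfiable. -/
/-!
A XOR-SAT clause is a pair `(S, b)`: the equation `⨁_{v ∈ S} x_v = b` over `ZMod 2`.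
A formula is a finite set of clauses; a 3-XOR-SAT formula has all clauses of size 3.
-/

/-- A formula is satisfiable iff some assignment satisfies every equation. -/
def XorSat (F : Finset (Finset ℕ × ZMod 2)) : Prop :=
  ∃ a : ℕ → ZMod 2, ∀ c ∈ F, ∑ v ∈ c.1, a v = c.2

/-- Substitute `x_z := x_t + lam` in a clause. -/
def substXor (z t : ℕ) (lam : ZMod 2) (c : Finset ℕ × ZMod 2) : Finset ℕ × ZMod 2 :=
  if z ∈ c.1 then (symmDiff (c.1.erase z) {t}, c.2 + lam) else c

/-- One reduction step: (a) remove a clause containing a pure variable (a variable appearing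
in no other clause); or (b) if two (3-variable) clauses `c₁, c₂` share exactly two variables,
with remaining variables `z` of `c₁` and `t` of `c₂` (so that `c₁ ∧ c₂` entails
`x_z ⊕ x_t = c₁.2 + c₂.2`), substitute `x_t + (c₁.2 + c₂.2)` for `x_z` everywhere and delete
the clause `c₁`. -/
def ReduceStep (F F' : Finset (Finset ℕ × ZMod 2)) : Prop :=
  (∃ c ∈ F, ∃ v ∈ c.1, (∀ c' ∈ F, v ∈ c'.1 → c' = c) ∧ F' = F.erase c) ∨
  (∃ c₁ ∈ F, ∃ c₂ ∈ F, c₁ ≠ c₂ ∧ c₁.1.card = 3 ∧ c₂.1.card = 3 ∧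
    (c₁.1 ∩ c₂.1).card = 2 ∧
    ∃ z ∈ c₁.1 \ c₂.1, ∃ t ∈ c₂.1 \ c₁.1,
      F' = (F.erase c₁).image (substXor z t (c₁.2 + c₂.2)))

/-- A formula is reduced: no variable appears in a single clause, and no two distinct clauses
share (exactly) two variables. -/
def ReducedXor (F : Finset (Finset ℕ × ZMod 2)) : Prop :=
  (∀ c ∈ F, ∀ v ∈ c.1, ∃ c' ∈ F, c' ≠ c ∧ v ∈ c'.1) ∧
  (∀ c₁ ∈ F, ∀ c₂ ∈ F, c₁ ≠ c₂ → (c₁.1 ∩ c₂.1).card ≠ 2)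

open Finset in
lemma zmod2_add_self (x : ZMod 2) : x + x = 0 := CharTwo.add_self_eq_zero x

lemma sum_symmDiff_z2 (A B : Finset ℕ) (f : ℕ → ZMod 2) :
    ∑ v ∈ symmDiff A B, f v = ∑ v ∈ A, f v + ∑ v ∈ B, f v := by
  classical
  have h1 := Finset.sum_inter_add_sum_sdiff A B f
  have h2 := Finset.sum_inter_add_sum_sdiff B A f
  rw [Finset.inter_comm] at h2
  have hd : Disjoint (A \ B) (B \ A) := disjoint_sdiff_sdiff
  have he : symmDiff A B = (A \ B) ∪ (B \ A) := rfl
  rw [he, Finset.sum_union hd, ← h1, ← h2]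
  linear_combination - zmod2_add_self (∑ v ∈ A ∩ B, f v)

lemma sum_erase_z2 (s : Finset ℕ) (z : ℕ) (hz : z ∈ s) (f : ℕ → ZMod 2) :
    ∑ v ∈ s.erase z, f v = ∑ v ∈ s, f v + f z := by
  have := Finset.add_sum_erase s f hz
  linear_combination this - zmod2_add_self (f z)

lemma symmDiff_singleton_eq (A : Finset ℕ) (t : ℕ) :
    symmDiff A {t} = if t ∈ A then A.erase t else insert t A := by
  classical
  ext x
  by_cases hx : x = t <;> split_ifs with ht <;>
    simp [Finset.mem_symmDiff, hx, ht]

lemma substXor_card (z t : ℕ) (lam : ZMod 2) (c : Finset ℕ × ZMod 2)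
    (h : c.1.card = 3 ∨ c.1.card = 1) :
    (substXor z t lam c).1.card = 3 ∨ (substXor z t lam c).1.card = 1 := by
  classical
  unfold substXor
  split_ifs with hz
  · simp only
    rw [symmDiff_singleton_eq]
    have hce : (c.1.erase z).card = c.1.card - 1 := Finset.card_erase_of_mem hz
    split_ifs with ht
    · have h2 : 0 < (c.1.erase z).card := Finset.card_pos.mpr ⟨t, ht⟩
      have he2 := Finset.card_erase_of_mem ht
      rcases h with h | h
      · right; omega
      · omega
    · rw [Finset.card_insert_of_notMem ht, hce]
      have hpos : 0 < c.1.card := Finset.card_pos.mpr ⟨z, hz⟩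
      rcases h with h | h
      · left; omega
      · right; omega
  · exact h

/-- If `a z = a t + lam` then `a` satisfies `substXor z t lam c` iff it satisfies `c`. -/
lemma substXor_sat (z t : ℕ) (lam : ZMod 2) (a : ℕ → ZMod 2) (hzt : a z = a t + lam)
    (c : Finset ℕ × ZMod 2) (hc : ∑ v ∈ c.1, a v = c.2) :
    ∑ v ∈ (substXor z t lam c).1, a v = (substXor z t lam c).2 := by
  classical
  unfold substXor
  split_ifs with hz
  · simp only
    rw [sum_symmDiff_z2, sum_erase_z2 c.1 z hz, Finset.sum_singleton, hc, hzt]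
    linear_combination zmod2_add_self (a t)
  · exact hc

lemma step_card_lt {F F' : Finset (Finset ℕ × ZMod 2)} (h : ReduceStep F F') :
    F'.card < F.card := by
  rcases h with ⟨c, hc, v, hv, hpure, rfl⟩ | ⟨c₁, hc₁, c₂, hc₂, hne, h31, h32, hi, z, hz, t, ht, rfl⟩
  · exact Finset.card_erase_lt_of_mem hc
  · calc ((F.erase c₁).image (substXor z t (c₁.2 + c₂.2))).card
        ≤ (F.erase c₁).card := Finset.card_image_le
      _ < F.card := Finset.card_erase_lt_of_mem hc₁

lemma step_sat' {F F' : Finset (Finset ℕ × ZMod 2)} (h : ReduceStep F F') :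
    XorSat F ↔ XorSat F' := by
  classical
  rcases h with ⟨c, hc, v, hv, hpure, rfl⟩ | ⟨c₁, hc₁, c₂, hc₂, hne, h31, h32, hi, z, hz, t, ht, rfl⟩
  · constructor
    · rintro ⟨a, ha⟩
      exact ⟨a, fun c' hc' => ha c' (Finset.mem_of_mem_erase hc')⟩
    · rintro ⟨a, ha⟩
      set a' := Function.update a v (c.2 + ∑ w ∈ c.1.erase v, a w) with ha'
      refine ⟨a', fun c' hc' => ?_⟩
      by_cases hcc : c' = c
      · subst hcc
        rw [← Finset.add_sum_erase _ _ hv]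
        have hupd : ∀ w ∈ c'.1.erase v, a' w = a w := fun w hw =>
          Function.update_of_ne (Finset.ne_of_mem_erase hw) _ _
        rw [Finset.sum_congr rfl hupd, ha', Function.update_self]
        linear_combination zmod2_add_self (∑ w ∈ c'.1.erase v, a w)
      · have hmem : c' ∈ F.erase c := Finset.mem_erase.mpr ⟨hcc, hc'⟩
        have hvno : v ∉ c'.1 := fun hvv => hcc (hpure c' hc' hvv)
        have hupd : ∀ w ∈ c'.1, a' w = a w := fun w hw =>
          Function.update_of_ne (fun e => hvno (by rw [← e]; exact hw)) _ _
        rw [Finset.sum_congr rfl hupd]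
        exact ha c' hmem
  · -- basic facts
    obtain ⟨hz1, hz2⟩ := Finset.mem_sdiff.mp hz
    obtain ⟨ht2, ht1⟩ := Finset.mem_sdiff.mp ht
    have hzt : z ≠ t := fun e => hz2 (e ▸ ht2)
    have hd1 : c₁.1 \ c₂.1 = {z} := by
      have hcard := Finset.card_sdiff_add_card_inter c₁.1 c₂.1
      rw [hi, h31] at hcard
      obtain ⟨w, hw⟩ := Finset.card_eq_one.mp (by omega : (c₁.1 \ c₂.1).card = 1)
      rw [hw] at hz ⊢
      simp [Finset.mem_singleton.mp hz]
    have hd2 : c₂.1 \ c₁.1 = {t} := by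
      have hcard := Finset.card_sdiff_add_card_inter c₂.1 c₁.1
      rw [Finset.inter_comm, hi, h32] at hcard
      obtain ⟨w, hw⟩ := Finset.card_eq_one.mp (by omega : (c₂.1 \ c₁.1).card = 1)
      rw [hw] at ht ⊢
      simp [Finset.mem_singleton.mp ht]
    set lam := c₁.2 + c₂.2 with hlam
    constructor
    · rintro ⟨a, ha⟩
      have key : a z = a t + lam := by
        have h1 := Finset.sum_inter_add_sum_sdiff c₁.1 c₂.1 a
        have h2 := Finset.sum_inter_add_sum_sdiff c₂.1 c₁.1 a
        rw [hd1, Finset.sum_singleton, ha c₁ hc₁] at h1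
        rw [hd2, Finset.sum_singleton, Finset.inter_comm, ha c₂ hc₂] at h2
        linear_combination h1 - h2 - zmod2_add_self c₂.2
      refine ⟨a, fun c' hc' => ?_⟩
      obtain ⟨c, hcF, rfl⟩ := Finset.mem_image.mp hc'
      exact substXor_sat z t lam a key c (ha c (Finset.mem_of_mem_erase hcF))
    · rintro ⟨a, ha⟩
      set a' := Function.update a z (a t + lam) with ha'
      have hat : a' t = a t := Function.update_of_ne (Ne.symm hzt) _ _
      have haz : a' z = a t + lam := Function.update_self _ _ _
      refine ⟨a', fun c hcF => ?_⟩
      by_cases hcc : c = c₁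
      · subst hcc
        -- use c₂'s clause (unchanged by subst since z ∉ c₂.1)
        have hm2 : substXor z t lam c₂ ∈ (F.erase c).image (substXor z t lam) :=
          Finset.mem_image_of_mem _ (Finset.mem_erase.mpr ⟨Ne.symm hne, hc₂⟩)
        have hs2 := ha _ hm2
        rw [substXor, if_neg hz2] at hs2
        have hupd2 : ∀ w ∈ c₂.1, a' w = a w := fun w hw =>
          Function.update_of_ne (fun e => hz2 (by rw [← e]; exact hw)) _ _
        have hsum2 : ∑ w ∈ c₂.1, a' w = c₂.2 := by
          rw [Finset.sum_congr rfl hupd2]; exact hs2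
        have h1 := Finset.sum_inter_add_sum_sdiff c.1 c₂.1 a'
        have h2 := Finset.sum_inter_add_sum_sdiff c₂.1 c.1 a'
        rw [hd1, Finset.sum_singleton, haz] at h1
        rw [hd2, Finset.sum_singleton, hat, Finset.inter_comm, hsum2] at h2
        rw [← h1, hlam]
        linear_combination h2 + zmod2_add_self c₂.2
      · have hs := ha _ (Finset.mem_image_of_mem _ (Finset.mem_erase.mpr ⟨hcc, hcF⟩))
        by_cases hzc : z ∈ c.1
        · rw [substXor, if_pos hzc] at hs
          simp only at hs
          rw [sum_symmDiff_z2, Finset.sum_singleton, sum_erase_z2 c.1 z hzc] at hs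
          have hupd : ∀ w ∈ c.1.erase z, a' w = a w := fun w hw =>
            Function.update_of_ne (Finset.ne_of_mem_erase hw) _ _
          rw [← Finset.add_sum_erase _ _ hzc, Finset.sum_congr rfl hupd, haz,
            sum_erase_z2 c.1 z hzc]
          linear_combination hs + zmod2_add_self lam
        · rw [substXor, if_neg hzc] at hs
          have hupd : ∀ w ∈ c.1, a' w = a w := fun w hw =>
            Function.update_of_ne (fun e => hzc (by rw [← e]; exact hw)) _ _
          rw [Finset.sum_congr rfl hupd]
          exact hs

lemma step_inv {F F' : Finset (Finset ℕ × ZMod 2)} (h : ReduceStep F F')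
    (hF : ∀ c ∈ F, c.1.card = 3 ∨ c.1.card = 1) :
    ∀ c ∈ F', c.1.card = 3 ∨ c.1.card = 1 := by
  rcases h with ⟨c, hc, v, hv, hpure, rfl⟩ | ⟨c₁, hc₁, c₂, hc₂, hne, h31, h32, hi, z, hz, t, ht, rfl⟩
  · exact fun c' hc' => hF c' (Finset.mem_of_mem_erase hc')
  · intro c' hc'
    obtain ⟨c, hcF, rfl⟩ := Finset.mem_image.mp hc'
    exact substXor_card _ _ _ _ (hF c (Finset.mem_of_mem_erase hcF))

lemma stuck_reduced {F : Finset (Finset ℕ × ZMod 2)}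
    (hF : ∀ c ∈ F, c.1.card = 3 ∨ c.1.card = 1)
    (hstuck : ∀ F'', ¬ ReduceStep F F'') : ReducedXor F := by
  constructor
  · intro c hc v hv
    by_contra hno
    push_neg at hno
    refine hstuck (F.erase c) (Or.inl ⟨c, hc, v, hv, fun c' hc' hv' => ?_, rfl⟩)
    by_contra hne
    exact hno c' hc' hne hv'
  · intro c₁ hc₁ c₂ hc₂ hne hi
    have hsub1 : (c₁.1 ∩ c₂.1).card ≤ c₁.1.card := Finset.card_le_card (Finset.inter_subset_left)
    have hsub2 : (c₁.1 ∩ c₂.1).card ≤ c₂.1.card := Finset.card_le_card (Finset.inter_subset_right)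
    have h31 : c₁.1.card = 3 := by rcases hF c₁ hc₁ with h | h <;> omega
    have h32 : c₂.1.card = 3 := by rcases hF c₂ hc₂ with h | h <;> omega
    have hcard1 := Finset.card_sdiff_add_card_inter c₁.1 c₂.1
    have hcard2 := Finset.card_sdiff_add_card_inter c₂.1 c₁.1
    rw [hi, h31] at hcard1
    rw [Finset.inter_comm, hi, h32] at hcard2
    obtain ⟨z, hz⟩ := Finset.card_pos.mp (by omega : 0 < (c₁.1 \ c₂.1).card)
    obtain ⟨t, ht⟩ := Finset.card_pos.mp (by omega : 0 < (c₂.1 \ c₁.1).card)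
    exact hstuck _ (Or.inr ⟨c₁, hc₁, c₂, hc₂, hne, h31, h32, hi, z, hz, t, ht, rfl⟩)

/-- for any 3-XOR-SAT formula, the reduction process terminates (there is no
infinite chain of reduction steps), each step preserves satisfiability, and any formula
reachable from `F` from which no further step is possible is reduced (and hence satisfiable
iff `F` is). -/
theorem reduction_terminates_equisat (F : Finset (Finset ℕ × ZMod 2))
    (h3 : ∀ c ∈ F, c.1.card = 3) :
    (¬ ∃ f : ℕ → Finset (Finset ℕ × ZMod 2),
        f 0 = F ∧ ∀ n : ℕ, ReduceStep (f n) (f (n + 1))) ∧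
    (∀ F₁ F₂ : Finset (Finset ℕ × ZMod 2), ReduceStep F₁ F₂ → (XorSat F₁ ↔ XorSat F₂)) ∧
    (∀ F' : Finset (Finset ℕ × ZMod 2), Relation.ReflTransGen ReduceStep F F' →
      (∀ F'' : Finset (Finset ℕ × ZMod 2), ¬ ReduceStep F' F'') →
      ReducedXor F' ∧ (XorSat F ↔ XorSat F')) := by
  refine ⟨?_, fun F₁ F₂ h => step_sat' h, ?_⟩
  · rintro ⟨f, hf0, hfs⟩
    have key : ∀ n, (f n).card + n ≤ (f 0).card := by
      intro n
      induction n with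
      | zero => simp
      | succ n ih => have := step_card_lt (hfs n); omega
    have := key ((f 0).card + 1)
    omega
  · intro F' hreach hstuck
    have main : (∀ c ∈ F', c.1.card = 3 ∨ c.1.card = 1) ∧ (XorSat F ↔ XorSat F') := by
      clear hstuck
      induction hreach with
      | refl => exact ⟨fun c hc => Or.inl (h3 c hc), Iff.rfl⟩
      | tail hab hbc ih => exact ⟨step_inv hbc ih.1, ih.2.trans (step_sat' hbc)⟩
    exact ⟨stuck_reduced main.1 hstuck, main.2⟩
end

section
/- For a 2-regular reduced satisfiable 3-XOR-SAT formula Φ, fixing a satisfying assignment A*, the RandomWalkSat dynamics on assignments corresponds to an annihilating random walk on the dual graph T(Φ) (vertices = clauses, edges = shared variables): the set of unsatisfied clauses plays the role of occupied vertices, and flipping a variable of an unsatisfied clause moves/annihilates balls along the corresponding edge. -/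
/-!
A XOR-SAT clause is a pair `(S, b)` : the equation `⨁_{v ∈ S} x_v = b` over `ZMod 2`;
a formula is a finite set of clauses.
-/

/-- A formula is satisfiable iff some assignment satisfies every equation. -/
def XorSat' (F : Finset (Finset ℕ × ZMod 2)) : Prop :=
  ∃ a : ℕ → ZMod 2, ∀ c ∈ F, ∑ v ∈ c.1, a v = c.2

/-- The set of clauses of `Φ` unsatisfied by the assignment `a` (the occupied vertices of
the dual graph). -/
def unsatSet (Φ : Finset (Finset ℕ × ZMod 2)) (a : ℕ → ZMod 2) :
    Finset (Finset ℕ × ZMod 2) :=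
  Φ.filter (fun c => ∑ v ∈ c.1, a v ≠ c.2)

/-- let `Φ` be a 2-regular (every variable occurs in exactly two clauses),
reduced (no pure variables, no two clauses sharing two variables), satisfiable 3-XOR-SAT
formula. In the dual graph `T(Φ)` (vertices = clauses, one edge per variable joining the two
clauses containing it), a RandomWalkSat move—flipping a variable `v` of an unsatisfied
clause—transforms the set of unsatisfied clauses by the symmetric difference with the pair
`{c₁, c₂}` of clauses containing `v`: exactly an annihilating-walk move (the ball moves if
one endpoint is occupied, two balls annihilate if both are). -/
theorem randomwalksat_is_annihilating_walk (Φ : Finset (Finset ℕ × ZMod 2))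
    (h3 : ∀ c ∈ Φ, c.1.card = 3)
    (h2reg : ∀ v : ℕ, (∃ c ∈ Φ, v ∈ c.1) → (Φ.filter (fun c => v ∈ c.1)).card = 2)
    (hred : ∀ c₁ ∈ Φ, ∀ c₂ ∈ Φ, c₁ ≠ c₂ → (c₁.1 ∩ c₂.1).card ≤ 1)
    (hsat : XorSat' Φ) :
    ∀ (a : ℕ → ZMod 2) (v : ℕ),
      (∃ c ∈ unsatSet Φ a, v ∈ c.1) →
      ∃ c₁ c₂ : Finset ℕ × ZMod 2, c₁ ≠ c₂ ∧
        Φ.filter (fun c => v ∈ c.1) = {c₁, c₂} ∧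
        unsatSet Φ (Function.update a v (a v + 1)) = symmDiff (unsatSet Φ a) {c₁, c₂} := by
  intro a v ⟨c, hc, hv⟩
  have hcΦ : c ∈ Φ := (Finset.mem_filter.mp hc).1
  obtain ⟨c₁, c₂, hne, hpair⟩ := Finset.card_eq_two.mp (h2reg v ⟨c, hcΦ, hv⟩)
  refine ⟨c₁, c₂, hne, hpair, ?_⟩
  have hmem : ∀ c' : Finset ℕ × ZMod 2,
      c' ∈ ({c₁, c₂} : Finset (Finset ℕ × ZMod 2)) ↔ c' ∈ Φ ∧ v ∈ c'.1 := by
    intro c'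
    rw [← hpair, Finset.mem_filter]
  have hsum : ∀ s : Finset ℕ, v ∈ s →
      ∑ w ∈ s, Function.update a v (a v + 1) w = (∑ w ∈ s, a w) + 1 := by
    intro s hs
    rw [← Finset.add_sum_erase _ _ hs, ← Finset.add_sum_erase _ a hs,
      Function.update_self]
    have : ∑ w ∈ s.erase v, Function.update a v (a v + 1) w = ∑ w ∈ s.erase v, a w := by
      refine Finset.sum_congr rfl fun w hw => ?_
      exact Function.update_of_ne (Finset.ne_of_mem_erase hw) _ _
    rw [this]; ring
  have hsum' : ∀ s : Finset ℕ, v ∉ s →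
      ∑ w ∈ s, Function.update a v (a v + 1) w = ∑ w ∈ s, a w := by
    intro s hs
    refine Finset.sum_congr rfl fun w hw => ?_
    exact Function.update_of_ne (by rintro rfl; exact hs hw) _ _
  ext c'
  rw [Finset.mem_symmDiff]
  simp only [unsatSet, Finset.mem_filter, hmem]
  by_cases hvc : v ∈ c'.1
  · rw [hsum _ hvc]
    constructor
    · rintro ⟨hΦ, hne'⟩
      refine Or.inr ⟨⟨hΦ, hvc⟩, ?_⟩
      rintro ⟨-, h⟩
      apply h
      by_contra hne''
      have h1 : (∑ w ∈ c'.1, a w) = c'.2 + 1 := by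
        have := ZMod.val_cast_of_lt (show 1 < 2 by norm_num)
        -- in ZMod 2, x ≠ y ↔ x = y + 1
        have : ∀ x y : ZMod 2, x ≠ y → x = y + 1 := by decide
        exact this _ _ hne''
      rw [h1] at hne'
      apply hne'
      have : ∀ y : ZMod 2, y + 1 + 1 = y := by decide
      exact this _
    · rintro (⟨⟨hΦ, hne'⟩, hnot⟩ | ⟨⟨hΦ, -⟩, hnot⟩)
      · exact absurd ⟨hΦ, hvc⟩ hnot
      · refine ⟨hΦ, ?_⟩
        have heq : (∑ w ∈ c'.1, a w) = c'.2 := by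
          by_contra h; exact hnot ⟨hΦ, h⟩
        rw [heq]
        exact fun h => by
          have : ∀ y : ZMod 2, y + 1 ≠ y := by decide
          exact this _ h
  · rw [hsum' _ hvc]
    constructor
    · rintro ⟨hΦ, hne'⟩
      exact Or.inl ⟨⟨hΦ, hne'⟩, fun h => hvc h.2⟩
    · rintro (⟨h, -⟩ | ⟨⟨-, hh⟩, -⟩)
      · exact h
      · exact absurd hh hvc
end
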